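/- Let G = C_9 be the cycle on vertices {x_1,...,x_9} and let W = {x_2, x_5, x_8}, a maximal independent set of G. Then the expansion G[W] satisfies χ(G[W]) = χ(G) = 3. -/

import Mathlib

/-!
`C_9` is an odd cycle, so `χ(C_9) = 3`, and `C_9` is an induced subgraph of `C_9[W]`. For the upper
bound take a 3-coloring of `C_9` in which both neighbours of each `w ∈ W` share a color: the twin
of `w` then gets the third color, and twins of distinct vertices of `W` are non-adjacent because
`W` is independent. `W` is maximal since every vertex outside it has a neighbour in it.
-/

open SimpleGraph MvPolynomial

/-- The chromatic number of a graph, as a natural number: the least `m` such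
that `G` has a proper `m`-coloring. -/
noncomputable def chromNum {V : Type*} (G : SimpleGraph V) : ℕ :=
  sInf {m | G.Colorable m}

/-- `G` is critically `s`-chromatic: `χ(G) = s` and deleting any vertex drops
the chromatic number to `s - 1`. -/
def CriticallyChromatic {V : Type*} (G : SimpleGraph V) (s : ℕ) : Prop :=
  chromNum G = s ∧ ∀ v : V, chromNum (G.induce {v}ᶜ) = s - 1

/-- The expansion `G[W]` of a graph `G` at a set of vertices `W`: each vertex
`w ∈ W` is replaced by two adjacent copies (`Sum.inl w` and `Sum.inr w`), each
adjacent to (both copies of) the neighbors of `w`. -/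
def expansion {V : Type*} (G : SimpleGraph V) (W : Set V) : SimpleGraph (V ⊕ W) :=
  SimpleGraph.fromRel (fun a b =>
    match a, b with
    | Sum.inl u, Sum.inl v => G.Adj u v
    | Sum.inl u, Sum.inr w => G.Adj u (w : V) ∨ u = (w : V)
    | Sum.inr _, Sum.inl _ => False
    | Sum.inr w, Sum.inr w' => G.Adj (w : V) (w' : V))

/-- The `s`-th expansion `G^s` of `G`: every vertex is replaced by a clique of
size `s` (its shadows), and shadows of adjacent vertices are adjacent. -/
def nExpansion {V : Type*} (G : SimpleGraph V) (s : ℕ) : SimpleGraph (V × Fin s) :=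
  SimpleGraph.fromRel (fun a b => G.Adj a.1 b.1 ∨ a.1 = b.1)

/-- `W` is an independent set of `G`. -/
def IsIndepSet {V : Type*} (G : SimpleGraph V) (W : Set V) : Prop :=
  ∀ ⦃u v⦄, u ∈ W → v ∈ W → ¬ G.Adj u v

/-- `W` is a maximal independent set of `G`. -/
def IsMaxIndepSet {V : Type*} (G : SimpleGraph V) (W : Set V) : Prop :=
  _root_.IsIndepSet G W ∧ ∀ W', _root_.IsIndepSet G W' → W ⊆ W' → W = W'

/-- `W` is a vertex cover of `G`. -/
def IsVertexCover {V : Type*} (G : SimpleGraph V) (W : Set V) : Prop :=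
  ∀ ⦃u v⦄, G.Adj u v → u ∈ W ∨ v ∈ W

/-- `W` is a minimal vertex cover of `G`. -/
def IsMinVertexCover {V : Type*} (G : SimpleGraph V) (W : Set V) : Prop :=
  _root_.IsVertexCover G W ∧ ∀ W' ⊆ W, _root_.IsVertexCover G W' → W' = W

/-- `G` has a `b`-fold coloring using (at most) `d` colors: each vertex gets a
set of `b` colors, adjacent vertices getting disjoint sets. -/
def FoldColorable {V : Type*} (G : SimpleGraph V) (b d : ℕ) : Prop :=
  ∃ f : V → Finset (Fin d), (∀ v, (f v).card = b) ∧
    ∀ ⦃u v⦄, G.Adj u v → Disjoint (f u) (f v)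

/-- The `b`-fold chromatic number `χ_b(G)`. -/
noncomputable def foldChromNum {V : Type*} (G : SimpleGraph V) (b : ℕ) : ℕ :=
  sInf {d | FoldColorable G b d}

/-- The fractional chromatic number `χ_f(G) = inf_b χ_b(G)/b`. -/
noncomputable def fracChromNum {V : Type*} (G : SimpleGraph V) : ℝ :=
  ⨅ b : ℕ+, (foldChromNum G b : ℝ) / (b : ℝ)

/-- The cover ideal `J(G) = ⋂_{{i,j} ∈ E(G)} (x_i, x_j)` of a graph `G` on
`{x_1, …, x_n}`, inside `k[x_1, …, x_n]`. -/
noncomputable def coverIdeal (k : Type*) [Field k] {n : ℕ} (G : SimpleGraph (Fin n)) :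
    Ideal (MvPolynomial (Fin n) k) :=
  ⨅ (i : Fin n) (j : Fin n) (_ : G.Adj i j),
    Ideal.span {MvPolynomial.X i, MvPolynomial.X j}

lemma chromNum_eq_of_chromaticNumber_eq {V : Type*} {G : SimpleGraph V} {n : ℕ}
    (h : G.chromaticNumber = n) : chromNum G = n := by
  have hn : G.Colorable n := chromaticNumber_le_iff_colorable.mp h.le
  refine le_antisymm (Nat.sInf_le hn) (le_csInf ⟨n, hn⟩ fun m hm => ?_)
  exact_mod_cast h ▸ hm.chromaticNumber_le

lemma isMaxIndepSet_of_forall_exists_adj {V : Type*} {G : SimpleGraph V} {W : Set V}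
    (hW : _root_.IsIndepSet G W) (hdom : ∀ v ∉ W, ∃ w ∈ W, G.Adj v w) : IsMaxIndepSet G W := by
  refine ⟨hW, fun W' hW' hWW' => hWW'.antisymm fun v hv => ?_⟩
  by_contra hvW
  obtain ⟨w, hw, hvw⟩ := hdom v hvW
  exact hW' hv (hWW' hw) hvw

namespace expansion

variable {V : Type*} {G : SimpleGraph V} {W : Set V}

@[simp]
lemma adj_inl_inl {u v : V} : (expansion G W).Adj (.inl u) (.inl v) ↔ G.Adj u v := by
  simp only [expansion, fromRel_adj, ne_eq, Sum.inl.injEq]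
  exact ⟨fun h => h.2.elim id G.adj_symm, fun h => ⟨h.ne, .inl h⟩⟩

@[simp]
lemma adj_inl_inr {u : V} {w : W} :
    (expansion G W).Adj (.inl u) (.inr w) ↔ G.Adj u w ∨ u = w := by
  simp [expansion]

@[simp]
lemma adj_inr_inl {u : V} {w : W} :
    (expansion G W).Adj (.inr w) (.inl u) ↔ G.Adj u w ∨ u = w := by
  rw [adj_comm, adj_inl_inr]

@[simp]
lemma adj_inr_inr {w w' : W} : (expansion G W).Adj (.inr w) (.inr w') ↔ G.Adj w w' := by
  simp only [expansion, fromRel_adj, ne_eq, Sum.inr.injEq]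
  exact ⟨fun h => h.2.elim id G.adj_symm, fun h => ⟨fun e => h.ne (congrArg _ e), .inl h⟩⟩

def inlEmbedding : G ↪g expansion G W where
  toEmbedding := .inl
  map_rel_iff' := adj_inl_inl

lemma chromaticNumber_le : G.chromaticNumber ≤ (expansion G W).chromaticNumber :=
  chromaticNumber_mono_of_hom inlEmbedding.toHom

def coloringOfTwinColors {α : Type*} (C : G.Coloring α) (d : W → α) (hW : _root_.IsIndepSet G W)
    (hd : ∀ (w : W) (u : V), G.Adj u w ∨ u = w → C u ≠ d w) :
    (expansion G W).Coloring α :=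
  Coloring.mk (Sum.elim C d) <| by
    rintro (u | w) (v | w') h
    · exact C.valid (adj_inl_inl.mp h)
    · exact hd w' u (adj_inl_inr.mp h)
    · exact (hd w v (adj_inr_inl.mp h)).symm
    · exact absurd (adj_inr_inr.mp h) (hW w.2 w'.2)

end expansion

lemma cycleGraph_nine_isIndepSet : _root_.IsIndepSet (cycleGraph 9) {(1 : Fin 9), 4, 7} := by
  simp only [_root_.IsIndepSet, Set.mem_insert_iff, Set.mem_singleton_iff]
  decide

lemma cycleGraph_nine_exists_adj_of_notMem (v : Fin 9) (hv : v ∉ ({1, 4, 7} : Set (Fin 9))) :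
    ∃ w ∈ ({1, 4, 7} : Set (Fin 9)), (cycleGraph 9).Adj v w := by
  simp only [Set.mem_insert_iff, Set.mem_singleton_iff] at hv ⊢
  revert v
  decide

/-- Both neighbours of each of `1, 4, 7` get the same color. -/
def cycleGraphNineColoring : (cycleGraph 9).Coloring (Fin 3) :=
  Coloring.mk ![0, 1, 0, 2, 1, 2, 1, 0, 1] (by decide)

lemma cycleGraphNineColoring_ne_twinColor (w : ({1, 4, 7} : Set (Fin 9))) (u : Fin 9)
    (h : (cycleGraph 9).Adj u w ∨ u = w) :
    cycleGraphNineColoring u ≠ if (w : Fin 9) = 4 then 0 else 2 := by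
  obtain ⟨w, hw⟩ := w
  simp only [Set.mem_insert_iff, Set.mem_singleton_iff] at hw
  revert u w
  decide

/-- Vertex `x_i` of the paper is `i - 1 : Fin 9`. -/
theorem c9_expansion_not_increasing :
    IsMaxIndepSet (SimpleGraph.cycleGraph 9) {(1 : Fin 9), 4, 7} ∧
    chromNum (expansion (SimpleGraph.cycleGraph 9) {(1 : Fin 9), 4, 7}) = 3 ∧
    chromNum (SimpleGraph.cycleGraph 9) = 3 := by
  have hχ : (cycleGraph 9).chromaticNumber = 3 :=
    chromaticNumber_cycleGraph_of_odd 9 (by norm_num) (by decide)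
  have hcol := (expansion.coloringOfTwinColors cycleGraphNineColoring _
    cycleGraph_nine_isIndepSet cycleGraphNineColoring_ne_twinColor).colorable
  rw [Fintype.card_fin] at hcol
  refine ⟨isMaxIndepSet_of_forall_exists_adj cycleGraph_nine_isIndepSet cycleGraph_nine_exists_adj_of_notMem,
    chromNum_eq_of_chromaticNumber_eq ?_, chromNum_eq_of_chromaticNumber_eq hχ⟩
  exact le_antisymm hcol.chromaticNumber_le (hχ.symm.trans_le expansion.chromaticNumber_le)
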